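/- arXiv:1507.02574 — 8 statements merged into one kernel-verified Lean document; each statement's English description precedes it below -/
import Mathlib

section
/- There is an absolute constant c > 0 such that the following holds. Let P ⊆ ℝ^d be a finite nonempty set, let ε ∈ (0,1), and let q ∈ ℝ^d be any point. Then there exist k ≤ c/ε² points p_1, …, p_k ∈ P and nonnegative coefficients α_1, …, α_k summing to 1 such that ‖q − Σ_{i=1}^k α_i p_i‖ ≤ dist(q, conv(P)) + ε·diam(P). -/
/-!
Let `x` be the point of `conv P` nearest to `q` and pick `p₁, p₂, … ∈ P` greedily: given the
error `e = ∑ pᵢ - n • x`, take `p ∈ P` minimising `⟪e, ·⟫`. Since `x ∈ conv P`, `⟪e, p - x⟫ ≤ 0`,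
so `‖e + (p - x)‖² ≤ ‖e‖² + (diam P)²`. Hence `‖e‖² ≤ n (diam P)²`, and the uniform average of
`n = ⌈ε⁻²⌉` points lies within `ε · diam P` of `x`.
-/

open Metric RealInnerProductSpace

section Greedy

variable {E : Type*} [NormedAddCommGroup E] [InnerProductSpace ℝ E] {s : Set E} {x : E}

lemma exists_mem_inner_le_of_mem_convexHull (hx : x ∈ convexHull ℝ s) (v : E) :
    ∃ p ∈ s, ⟪v, p⟫ ≤ ⟪v, x⟫ :=
  ((innerₛₗ ℝ v).concaveOn convex_univ).exists_le_of_mem_convexHull (Set.subset_univ _) hx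

lemma exists_norm_sum_sub_nsmul_sq_le (hx : x ∈ convexHull ℝ s) {R : ℝ}
    (hR : ∀ p ∈ s, ‖p - x‖ ≤ R) (n : ℕ) :
    ∃ p : Fin n → E, (∀ i, p i ∈ s) ∧ ‖∑ i, p i - n • x‖ ^ 2 ≤ n * R ^ 2 := by
  induction n with
  | zero => exact ⟨Fin.elim0, fun i => i.elim0, by simp⟩
  | succ n ih =>
    obtain ⟨p, hps, hp⟩ := ih
    set e := ∑ i, p i - n • x
    obtain ⟨q, hqs, hq⟩ := exists_mem_inner_le_of_mem_convexHull hx e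
    have hcross : ⟪e, q - x⟫ ≤ 0 := by rw [inner_sub_right]; linarith
    have hqR : ‖q - x‖ ^ 2 ≤ R ^ 2 := pow_le_pow_left₀ (norm_nonneg _) (hR q hqs) 2
    refine ⟨Fin.cons q p, Fin.cases hqs hps, ?_⟩
    calc ‖∑ i, (Fin.cons q p : Fin (n + 1) → E) i - (n + 1) • x‖ ^ 2
        = ‖e + (q - x)‖ ^ 2 := by rw [Fin.sum_cons, succ_nsmul, add_comm q, add_sub_add_comm]
      _ = ‖e‖ ^ 2 + 2 * ⟪e, q - x⟫ + ‖q - x‖ ^ 2 := norm_add_sq_real _ _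
      _ ≤ (n + 1 : ℕ) * R ^ 2 := by push_cast; linarith

lemma exists_norm_average_sub_le (hx : x ∈ convexHull ℝ s) {R : ℝ}
    (hR : ∀ p ∈ s, ‖p - x‖ ≤ R) {ε : ℝ} (hε : 0 < ε) {n : ℕ} (hn : (ε ^ 2)⁻¹ ≤ n) :
    ∃ p : Fin n → E, (∀ i, p i ∈ s) ∧ ‖(n : ℝ)⁻¹ • ∑ i, p i - x‖ ≤ ε * R := by
  obtain ⟨p₀, hp₀⟩ := convexHull_nonempty_iff.mp ⟨x, hx⟩
  have hR0 : 0 ≤ R := (norm_nonneg _).trans (hR p₀ hp₀)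
  have hn0 : (0 : ℝ) < n := (inv_pos.mpr (by positivity)).trans_le hn
  obtain ⟨p, hps, hp⟩ := exists_norm_sum_sub_nsmul_sq_le hx hR n
  refine ⟨p, hps, ?_⟩
  set e := ∑ i, p i - n • x
  have hscale : (n : ℝ)⁻¹ • ∑ i, p i - x = (n : ℝ)⁻¹ • e := by
    rw [smul_sub, ← Nat.cast_smul_eq_nsmul ℝ, inv_smul_smul₀ hn0.ne']
  rw [hscale, norm_smul, norm_inv, Real.norm_natCast]
  refine (pow_le_pow_iff_left₀ (by positivity) (by positivity) two_ne_zero).mp ?_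
  calc ((n : ℝ)⁻¹ * ‖e‖) ^ 2 = (n : ℝ)⁻¹ ^ 2 * ‖e‖ ^ 2 := mul_pow _ _ _
    _ ≤ (n : ℝ)⁻¹ ^ 2 * (n * R ^ 2) := by gcongr
    _ = (n : ℝ)⁻¹ * R ^ 2 := by field_simp
    _ ≤ ε ^ 2 * R ^ 2 := by gcongr; rwa [inv_le_comm₀ hn0 (by positivity)]
    _ = (ε * R) ^ 2 := (mul_pow _ _ _).symm

end Greedy

theorem sparse_approx_dist_to_convexHull :
    ∃ c : ℝ, 0 < c ∧
      ∀ (d : ℕ) (P : Finset (EuclideanSpace ℝ (Fin d))), P.Nonempty →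
        ∀ ε : ℝ, ε ∈ Set.Ioo (0 : ℝ) 1 →
          ∀ q : EuclideanSpace ℝ (Fin d),
            ∃ (k : ℕ) (p : Fin k → EuclideanSpace ℝ (Fin d)) (α : Fin k → ℝ),
              (k : ℝ) ≤ c / ε ^ 2 ∧
              (∀ i, p i ∈ P) ∧
              (∀ i, 0 ≤ α i) ∧
              (∑ i, α i) = 1 ∧
              ‖q - ∑ i, α i • p i‖ ≤
                Metric.infDist q (convexHull ℝ (↑P : Set (EuclideanSpace ℝ (Fin d))))
                  + ε * Metric.diam (↑P : Set (EuclideanSpace ℝ (Fin d))) := by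
  refine ⟨2, two_pos, fun d P hP ε ⟨hε0, hε1⟩ q => ?_⟩
  set C := convexHull ℝ (↑P : Set (EuclideanSpace ℝ (Fin d)))
  set D := diam (↑P : Set (EuclideanSpace ℝ (Fin d)))
  have hC : IsCompact C := P.finite_toSet.isCompact_convexHull (𝕜 := ℝ)
  obtain ⟨x, hxC, hqx⟩ := hC.exists_infDist_eq_dist (hP.to_set.convexHull) q
  have hD : ∀ p ∈ (↑P : Set _), ‖p - x‖ ≤ D := fun p hp => by
    have := dist_le_diam_of_mem hC.isBounded (subset_convexHull ℝ _ hp) hxC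
    rwa [convexHull_diam, dist_eq_norm] at this
  set n := ⌈(ε ^ 2)⁻¹⌉₊
  have hn : n ≠ 0 := (Nat.ceil_pos.mpr (by positivity : (0 : ℝ) < (ε ^ 2)⁻¹)).ne'
  obtain ⟨p, hpP, hpx⟩ := exists_norm_average_sub_le (n := n) hxC hD hε0 (Nat.le_ceil _)
  refine ⟨n, p, fun _ => (n : ℝ)⁻¹, ?_, hpP, fun _ => by positivity, ?_, ?_⟩
  · calc (n : ℝ) ≤ 2 * (ε ^ 2)⁻¹ := Nat.ceil_le_two_mul (by gcongr; nlinarith)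
      _ = 2 / ε ^ 2 := by ring
  · simp [hn]
  · calc ‖q - ∑ i, (n : ℝ)⁻¹ • p i‖ ≤ dist q x + ‖(n : ℝ)⁻¹ • ∑ i, p i - x‖ := by
          rw [← Finset.smul_sum, ← dist_eq_norm, ← dist_eq_norm]
          exact dist_triangle_right _ _ _
      _ ≤ infDist q C + ε * D := by rw [hqx]; gcongr
end

section
/- Let q, y, p ∈ ℝ^d, let ε ∈ (0,1) and D > 0, and set ℓ = ‖q − y‖. Suppose ℓ > 0, ‖q − p‖ ≥ ℓ, ‖p − y‖ ≤ D, and ⟨(q − y)/ℓ, p − y⟩ ≥ ε·D. Then the distance from q to the segment [y, p] (the convex hull of {y, p}) satisfies dist(q, [y,p]) ≤ √(1 − ε²)·ℓ ≤ (1 − ε²/2)·ℓ. -/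
/-!
Put `u = q - y` and `v = p - y`. Expanding `‖u - v‖² ≥ ‖u‖²` gives `2⟪u, v⟫ ≤ ‖v‖² ≤ D²`, which
together with `⟪u, v⟫ ≥ ε D ℓ` yields `2 ε ℓ ≤ D`. Hence `s = ε ℓ / D` lies in `[0, 1]`, and the
point `y + s • v` of the segment satisfies
`‖u - s • v‖² = ℓ² - 2 s ⟪u, v⟫ + s² ‖v‖² ≤ ℓ² - 2 ε² ℓ² + ε² ℓ² = (1 - ε²) ℓ²`.
The second inequality is `√x ≤ (1 + x) / 2`.
-/

open Metric Set
open scoped RealInnerProductSpace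

section

variable {E : Type*} [SeminormedAddCommGroup E] [InnerProductSpace ℝ E]

theorem two_mul_inner_le_norm_sq_of_norm_le_norm_sub {u v : E} (h : ‖u‖ ≤ ‖u - v‖) :
    2 * ⟪u, v⟫ ≤ ‖v‖ ^ 2 := by
  have hsq : ‖u‖ ^ 2 ≤ ‖u - v‖ ^ 2 := pow_le_pow_left₀ (norm_nonneg u) h 2
  rw [norm_sub_sq_real] at hsq
  linarith

theorem norm_sub_smul_sq_le {u v : E} {s c D : ℝ} (hs : 0 ≤ s) (hv : ‖v‖ ≤ D)
    (hc : c ≤ ⟪u, v⟫) : ‖u - s • v‖ ^ 2 ≤ ‖u‖ ^ 2 - 2 * s * c + s ^ 2 * D ^ 2 := by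
  have hsv : ‖v‖ ^ 2 ≤ D ^ 2 := pow_le_pow_left₀ (norm_nonneg v) hv 2
  rw [norm_sub_sq_real, real_inner_smul_right, norm_smul, Real.norm_of_nonneg hs, mul_pow]
  nlinarith [mul_le_mul_of_nonneg_left hc hs, mul_le_mul_of_nonneg_left hsv (sq_nonneg s)]

theorem exists_mem_Icc_norm_sub_smul_sq_le {u v : E} {ε D : ℝ} (hε : 0 ≤ ε) (hD : 0 < D)
    (huv : ‖u‖ ≤ ‖u - v‖) (hv : ‖v‖ ≤ D) (hinner : ε * D * ‖u‖ ≤ ⟪u, v⟫) :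
    ∃ s ∈ Icc (0 : ℝ) 1, ‖u - s • v‖ ^ 2 ≤ (1 - ε ^ 2) * ‖u‖ ^ 2 := by
  have hD_ge : 2 * ε * ‖u‖ ≤ D := by
    have h2 := two_mul_inner_le_norm_sq_of_norm_le_norm_sub huv
    have hsv : ‖v‖ ^ 2 ≤ D ^ 2 := pow_le_pow_left₀ (norm_nonneg v) hv 2
    nlinarith
  refine ⟨ε * ‖u‖ / D, ⟨by positivity, ?_⟩, ?_⟩
  · rw [div_le_one hD]
    nlinarith [norm_nonneg u]
  · refine (norm_sub_smul_sq_le (by positivity) hv hinner).trans_eq ?_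
    field_simp
    ring

theorem infDist_segment_le_norm_sub_smul (q y p : E) {s : ℝ} (hs : s ∈ Icc (0 : ℝ) 1) :
    infDist q (segment ℝ y p) ≤ ‖(q - y) - s • (p - y)‖ := by
  have hmem : y + s • (p - y) ∈ segment ℝ y p := by
    rw [segment_eq_image']
    exact mem_image_of_mem _ hs
  calc infDist q (segment ℝ y p) ≤ dist q (y + s • (p - y)) := infDist_le_dist_of_mem hmem
    _ = ‖(q - y) - s • (p - y)‖ := by rw [dist_eq_norm, sub_sub]

end

theorem Real.sqrt_one_sub_sq_le {ε : ℝ} (hε : ε ^ 2 ≤ 2) : √(1 - ε ^ 2) ≤ 1 - ε ^ 2 / 2 :=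
  (Real.sqrt_le_left (by linarith)).2 (by nlinarith [sq_nonneg (ε ^ 2)])

theorem dist_to_segment_shrinks
    (d : ℕ) (q y p : EuclideanSpace ℝ (Fin d))
    (ε D : ℝ) (hε : ε ∈ Set.Ioo (0 : ℝ) 1) (hD : 0 < D)
    (ℓ : ℝ) (hℓ : ℓ = ‖q - y‖) (hℓpos : 0 < ℓ)
    (hqp : ℓ ≤ ‖q - p‖) (hpy : ‖p - y‖ ≤ D)
    (hinner : ε * D ≤ ⟪ℓ⁻¹ • (q - y), p - y⟫) :
    Metric.infDist q (segment ℝ y p) ≤ Real.sqrt (1 - ε ^ 2) * ℓ ∧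
      Real.sqrt (1 - ε ^ 2) * ℓ ≤ (1 - ε ^ 2 / 2) * ℓ := by
  obtain ⟨hε0, hε1⟩ := hε
  have hε_sq : ε ^ 2 ≤ 1 := pow_le_one₀ hε0.le hε1.le
  rw [real_inner_smul_left, le_inv_mul_iff₀ hℓpos, hℓ, mul_comm] at hinner
  rw [← sub_sub_sub_cancel_right q p y, hℓ] at hqp
  obtain ⟨s, hs, hsq⟩ := exists_mem_Icc_norm_sub_smul_sq_le hε0.le hD hqp hpy hinner
  refine ⟨(infDist_segment_le_norm_sub_smul q y p hs).trans ?_,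
    mul_le_mul_of_nonneg_right (Real.sqrt_one_sub_sq_le (by linarith)) hℓpos.le⟩
  rw [hℓ, ← Real.sqrt_sq (norm_nonneg (q - y)), ← Real.sqrt_mul' _ (sq_nonneg _)]
  exact (Real.le_sqrt (norm_nonneg _) (by nlinarith)).2 hsq
end

section
/- Approximate Carathéodory theorem: Let P ⊆ ℝ^d be a finite nonempty set and let ε ∈ (0,1). For every point x ∈ conv(P) there exists a point x' that is a convex combination of at most ⌈1/ε²⌉ points of P such that ‖x − x'‖ ≤ ε·diam(P). -/
/-!
Maurey's greedy argument. If `x ∈ conv s`, then for every vector `v` some `a ∈ s` has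
`⟪v, x - a⟫ ≤ 0` (a linear functional attains at least its value at `x` somewhere on `s`), so
`‖v + (x - a)‖² ≤ ‖v‖² + diam(s)²`. Choosing `p₁, p₂, …` greedily this way gives
`‖∑ᵢ (x - pᵢ)‖² ≤ k·diam(s)²`, hence the uniform average of `p₁, …, pₖ` is within
`diam(s)/√k ≤ ε·diam(s)` of `x` once `k = ⌈1/ε²⌉`.
-/

open Metric RealInnerProductSpace

section

variable {E : Type*} [NormedAddCommGroup E] [InnerProductSpace ℝ E] {s : Set E} {x : E} {r : ℝ}

lemma norm_sub_le_diam_of_mem_convexHull (hs : Bornology.IsBounded s) (hx : x ∈ convexHull ℝ s)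
    {a : E} (ha : a ∈ s) : ‖x - a‖ ≤ diam s := by
  rw [← dist_eq_norm, ← convexHull_diam]
  exact dist_le_diam_of_mem (isBounded_convexHull.2 hs) hx (subset_convexHull ℝ s ha)

lemma exists_mem_inner_sub_nonpos_of_mem_convexHull (hx : x ∈ convexHull ℝ s) (v : E) :
    ∃ a ∈ s, ⟪v, x - a⟫ ≤ 0 := by
  obtain ⟨a, ha, hle⟩ :=
    ((innerₛₗ ℝ v).convexOn convex_univ).exists_ge_of_mem_convexHull (Set.subset_univ s) hx
  refine ⟨a, ha, ?_⟩
  simpa [inner_sub_right] using hle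

lemma exists_mem_norm_add_sub_sq_le (hx : x ∈ convexHull ℝ s) (hr : ∀ a ∈ s, ‖x - a‖ ≤ r)
    (v : E) : ∃ a ∈ s, ‖v + (x - a)‖ ^ 2 ≤ ‖v‖ ^ 2 + r ^ 2 := by
  obtain ⟨a, ha, hinner⟩ := exists_mem_inner_sub_nonpos_of_mem_convexHull hx v
  refine ⟨a, ha, ?_⟩
  have hxa : ‖x - a‖ ^ 2 ≤ r ^ 2 := pow_le_pow_left₀ (norm_nonneg _) (hr a ha) 2
  rw [norm_add_sq_real]
  linarith

lemma exists_fin_norm_sum_sub_sq_le (hx : x ∈ convexHull ℝ s) (hr : ∀ a ∈ s, ‖x - a‖ ≤ r)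
    (n : ℕ) : ∃ p : Fin n → E, (∀ i, p i ∈ s) ∧ ‖∑ i, (x - p i)‖ ^ 2 ≤ n * r ^ 2 := by
  induction n with
  | zero => exact ⟨Fin.elim0, fun i => i.elim0, by simp⟩
  | succ n ih =>
    obtain ⟨p, hps, hp⟩ := ih
    obtain ⟨a, ha, hstep⟩ := exists_mem_norm_add_sub_sq_le hx hr (∑ i, (x - p i))
    refine ⟨Fin.cons a p, Fin.cases ha hps, ?_⟩
    rw [Fin.sum_univ_succ, Fin.cons_zero]
    simp only [Fin.cons_succ]
    push_cast
    rw [add_comm]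
    linarith

lemma exists_fin_norm_sub_average_le (hx : x ∈ convexHull ℝ s) (hr : ∀ a ∈ s, ‖x - a‖ ≤ r)
    {n : ℕ} (hn : n ≠ 0) :
    ∃ p : Fin n → E, (∀ i, p i ∈ s) ∧ ‖x - ∑ i, (n : ℝ)⁻¹ • p i‖ ≤ r / √n := by
  have hr0 : 0 ≤ r := by
    obtain ⟨a, ha⟩ := convexHull_nonempty_iff.1 ⟨x, hx⟩
    exact (norm_nonneg _).trans (hr a ha)
  have hn0 : (0 : ℝ) < n := by positivity
  obtain ⟨p, hps, hp⟩ := exists_fin_norm_sum_sub_sq_le hx hr n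
  refine ⟨p, hps, ?_⟩
  have hsum : ‖∑ i, (x - p i)‖ ≤ √n * r := by
    rw [← pow_le_pow_iff_left₀ (norm_nonneg _) (by positivity) two_ne_zero, mul_pow,
      Real.sq_sqrt hn0.le]
    exact hp
  have hmean : x - ∑ i, (n : ℝ)⁻¹ • p i = (n : ℝ)⁻¹ • ∑ i, (x - p i) := by
    rw [← Finset.smul_sum, Finset.sum_sub_distrib, Finset.sum_const, Finset.card_univ,
      Fintype.card_fin, smul_sub, ← Nat.cast_smul_eq_nsmul ℝ, smul_smul, inv_mul_cancel₀ hn0.ne',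
      one_smul]
  calc ‖x - ∑ i, (n : ℝ)⁻¹ • p i‖ = (n : ℝ)⁻¹ * ‖∑ i, (x - p i)‖ := by
        rw [hmean, norm_smul, Real.norm_of_nonneg (by positivity)]
    _ ≤ (n : ℝ)⁻¹ * (√n * r) := by gcongr
    _ = r / √n := by
        field_simp
        rw [Real.sq_sqrt hn0.le]

end

theorem approximate_caratheodory_general
    (d : ℕ) (P : Finset (EuclideanSpace ℝ (Fin d)))
    (ε : ℝ) (hε : ε ∈ Set.Ioo (0 : ℝ) 1)
    (x : EuclideanSpace ℝ (Fin d))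
    (hx : x ∈ convexHull ℝ (↑P : Set (EuclideanSpace ℝ (Fin d)))) :
    ∃ (k : ℕ) (p : Fin k → EuclideanSpace ℝ (Fin d)) (α : Fin k → ℝ),
      k ≤ ⌈1 / ε ^ 2⌉₊ ∧
      (∀ i, p i ∈ P) ∧
      (∀ i, 0 ≤ α i) ∧
      (∑ i, α i) = 1 ∧
      ‖x - ∑ i, α i • p i‖ ≤
        ε * Metric.diam (↑P : Set (EuclideanSpace ℝ (Fin d))) := by
  set k := ⌈1 / ε ^ 2⌉₊
  have hε0 : 0 < ε := hε.1
  have hk : k ≠ 0 := (Nat.ceil_pos.2 (by positivity)).ne'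
  have hεk : 1 ≤ ε * √k := by
    have : 1 ≤ ε ^ 2 * k := by
      rw [← div_le_iff₀' (by positivity)]
      exact Nat.le_ceil _
    calc 1 ≤ √(ε ^ 2 * k) := Real.one_le_sqrt.2 this
      _ = ε * √k := by rw [Real.sqrt_mul (sq_nonneg ε), Real.sqrt_sq hε0.le]
  obtain ⟨p, hpP, hp⟩ := exists_fin_norm_sub_average_le hx
    (fun _ ha => norm_sub_le_diam_of_mem_convexHull P.finite_toSet.isBounded hx ha) hk
  refine ⟨k, p, fun _ => (k : ℝ)⁻¹, le_rfl, hpP, fun _ => by positivity, by simp [hk], hp.trans ?_⟩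
  rw [div_le_iff₀ (by positivity), mul_right_comm]
  exact le_mul_of_one_le_left diam_nonneg hεk

theorem approximate_caratheodory
    (d : ℕ) (P : Finset (EuclideanSpace ℝ (Fin d))) (hP : P.Nonempty)
    (ε : ℝ) (hε : ε ∈ Set.Ioo (0 : ℝ) 1)
    (x : EuclideanSpace ℝ (Fin d))
    (hx : x ∈ convexHull ℝ (↑P : Set (EuclideanSpace ℝ (Fin d)))) :
    ∃ (k : ℕ) (p : Fin k → EuclideanSpace ℝ (Fin d)) (α : Fin k → ℝ),
      k ≤ ⌈1 / ε ^ 2⌉₊ ∧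
      (∀ i, p i ∈ P) ∧
      (∀ i, 0 ≤ α i) ∧
      (∑ i, α i) = 1 ∧
      ‖x - ∑ i, α i • p i‖ ≤
        ε * Metric.diam (↑P : Set (EuclideanSpace ℝ (Fin d))) :=
  approximate_caratheodory_general d P ε hε x hx
end

section
/- Let P be a finite set of points on the unit sphere S^{d−1} = {x ∈ ℝ^d : ‖x‖ = 1} such that any two distinct points of P are at distance at least s > 0 from each other. Then for every p ∈ P, the distance from p to the convex hull of P \ {p} is at least s²/2. -/
/-!
For `p ∈ P`, every other point `q` of `P` lies on the unit sphere at distance at least `s` from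
`p`, so `⟪p, q⟫ = 1 - ‖p - q‖² / 2 ≤ 1 - s² / 2`. This half-space is convex, hence contains the
convex hull of `P \ {p}`, while `⟪p, p⟫ = 1`; since `p` is a unit vector, the gap `s² / 2` in the
value of `⟪p, ·⟫` bounds the distance from below.
-/

open Metric
open scoped Classical

open scoped RealInnerProductSpace

section

variable {E : Type*} [NormedAddCommGroup E] [InnerProductSpace ℝ E]

theorem real_inner_le_one_sub_sq_div_two {p q : E} (hp : ‖p‖ = 1) (hq : ‖q‖ = 1) {s : ℝ}
    (hs : 0 ≤ s) (hpq : s ≤ ‖p - q‖) : ⟪p, q⟫ ≤ 1 - s ^ 2 / 2 := by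
  have hsq : ‖p - q‖ ^ 2 = 2 - 2 * ⟪p, q⟫ := by
    rw [norm_sub_sq_real, hp, hq]
    ring
  nlinarith [pow_le_pow_left₀ hs hpq 2]

theorem convexHull_subset_setOf_inner_le {S : Set E} {u : E} {c : ℝ}
    (h : ∀ x ∈ S, ⟪u, x⟫ ≤ c) : convexHull ℝ S ⊆ {x | ⟪u, x⟫ ≤ c} :=
  convexHull_min h (convex_halfSpace_le (innerₛₗ ℝ u).isLinear c)

theorem inner_sub_le_infDist_of_forall_inner_le {C : Set E} (hC : C.Nonempty) {u : E}
    (hu : ‖u‖ ≤ 1) {c : ℝ} (h : ∀ x ∈ C, ⟪u, x⟫ ≤ c) (p : E) : ⟪u, p⟫ - c ≤ infDist p C := by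
  refine (le_infDist hC).2 fun x hx => ?_
  calc ⟪u, p⟫ - c ≤ ⟪u, p - x⟫ := by rw [inner_sub_right]; linarith [h x hx]
    _ ≤ ‖u‖ * ‖p - x‖ := real_inner_le_norm u (p - x)
    _ ≤ dist p x := by
      rw [dist_eq_norm]
      exact mul_le_of_le_one_left (norm_nonneg _) hu

end

theorem packing_on_sphere_far_from_hull_of_others
    (d : ℕ) (P : Finset (EuclideanSpace ℝ (Fin d)))
    (hcard : 2 ≤ P.card)
    (hsphere : ∀ p ∈ P, ‖p‖ = 1)
    (s : ℝ) (hs : 0 < s)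
    (hsep : ∀ p ∈ P, ∀ q ∈ P, p ≠ q → s ≤ ‖p - q‖) :
    ∀ p ∈ P,
      s ^ 2 / 2 ≤
        Metric.infDist p
          (convexHull ℝ (↑(P.erase p) : Set (EuclideanSpace ℝ (Fin d)))) := by
  intro p hp
  have hp1 := hsphere p hp
  have hothers : ∀ q ∈ (↑(P.erase p) : Set (EuclideanSpace ℝ (Fin d))), ⟪p, q⟫ ≤ 1 - s ^ 2 / 2 :=
    fun q hq =>
      have ⟨hqp, hqP⟩ := Finset.mem_erase.1 hq
      real_inner_le_one_sub_sq_div_two hp1 (hsphere q hqP) hs.le (hsep p hp q hqP (Ne.symm hqp))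
  have hne : (P.erase p).Nonempty := by
    rw [← Finset.card_pos, Finset.card_erase_of_mem hp]
    omega
  have hgap := inner_sub_le_infDist_of_forall_inner_le
    ((Finset.coe_nonempty.2 hne).mono (subset_convexHull ℝ _)) hp1.le
    (fun x hx => convexHull_subset_setOf_inner_le hothers hx) p
  rwa [real_inner_self_eq_norm_sq, hp1, one_pow, sub_sub_cancel] at hgap
end

section
/- Let Pin ⊆ ℝ^d be a finite nonempty set, let A ⊆ ℝ^d be a finite nonempty set, and let ε ≥ 0. Suppose that for every unit vector v ∈ ℝ^d one has max_{a ∈ A} ⟨v, a⟩ ≥ max_{p ∈ Pin} ⟨v, p⟩ − ε (i.e., A hits the ε-shadow of every direction). Then every point of conv(Pin) is within distance ε of conv(A). -/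
/-! Let `x ∈ conv(Pin)` lie at distance `δ > 0` from `conv(A)`, let `y` be its nearest point in
`conv(A)` and `v` the unit vector from `y` to `x`. The variational inequality for the nearest point
puts `conv(A)` inside `{⟪v, ·⟫ ≤ ⟪v, x⟫ - δ}`, while `x ∈ conv(Pin)` gives
`⟪v, x⟫ ≤ max_{Pin} ⟪v, ·⟫`; the hitting hypothesis for `v` then forces `δ ≤ ε`. -/

open Metric
open scoped RealInnerProductSpace

variable {E : Type*} [NormedAddCommGroup E] [InnerProductSpace ℝ E]

theorem inner_le_sup'_of_mem_convexHull {s : Finset E} (hs : s.Nonempty) (v : E) {x : E}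
    (hx : x ∈ convexHull ℝ (s : Set E)) : ⟪v, x⟫ ≤ s.sup' hs fun p => ⟪v, p⟫ :=
  convexHull_min (fun _ hp => s.le_sup' (fun p => ⟪v, p⟫) hp)
    (convex_halfSpace_le (innerₛₗ ℝ v).isLinear _) hx

theorem exists_unit_inner_add_infDist_le [ProperSpace E] {C : Set E} (hconv : Convex ℝ C)
    (hclosed : IsClosed C) (hne : C.Nonempty) {x : E} (hx : 0 < infDist x C) :
    ∃ v : E, ‖v‖ = 1 ∧ ∀ w ∈ C, ⟪v, w⟫ + infDist x C ≤ ⟪v, x⟫ := by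
  obtain ⟨y, hyC, hy⟩ := hclosed.exists_infDist_eq_dist hne x
  rw [hy, dist_eq_norm] at hx ⊢
  have hnearest : ∀ w ∈ C, ⟪x - y, w - y⟫ ≤ 0 := by
    refine (norm_eq_iInf_iff_real_inner_le_zero hconv hyC).mp ?_
    rw [← dist_eq_norm, ← hy, infDist_eq_iInf]
    simp only [dist_eq_norm]
  refine ⟨‖x - y‖⁻¹ • (x - y), by simp [norm_smul, hx.ne'], fun w hw => ?_⟩
  have hxw : ⟪x - y, w⟫ + ‖x - y‖ ^ 2 ≤ ⟪x - y, x⟫ := by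
    have := hnearest w hw
    rw [← real_inner_self_eq_norm_sq]
    simp only [inner_sub_left, inner_sub_right, real_inner_comm x y] at this ⊢
    linarith
  rw [real_inner_smul_left, real_inner_smul_left]
  calc ‖x - y‖⁻¹ * ⟪x - y, w⟫ + ‖x - y‖ = ‖x - y‖⁻¹ * (⟪x - y, w⟫ + ‖x - y‖ ^ 2) := by
        field_simp
    _ ≤ ‖x - y‖⁻¹ * ⟪x - y, x⟫ := by gcongr

theorem shadow_hitting_implies_approx
    (d : ℕ) (Pin A : Finset (EuclideanSpace ℝ (Fin d)))
    (hPin : Pin.Nonempty) (hA : A.Nonempty)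
    (ε : ℝ) (hε : 0 ≤ ε)
    (hhit : ∀ v : EuclideanSpace ℝ (Fin d), ‖v‖ = 1 →
      (Pin.sup' hPin fun p => ⟪v, p⟫) - ε ≤ A.sup' hA fun a => ⟪v, a⟫) :
    ∀ x ∈ convexHull ℝ (↑Pin : Set (EuclideanSpace ℝ (Fin d))),
      Metric.infDist x (convexHull ℝ (↑A : Set (EuclideanSpace ℝ (Fin d)))) ≤ ε := by
  intro x hx
  by_contra! hfar
  obtain ⟨v, hv, hsep⟩ := exists_unit_inner_add_infDist_le (convex_convexHull ℝ _)
    (A.finite_toSet.isCompact_convexHull ℝ).isClosed hA.to_set.convexHull (hε.trans_lt hfar)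
  have hA_le : (A.sup' hA fun a => ⟪v, a⟫) + infDist x (convexHull ℝ ↑A) ≤ ⟪v, x⟫ := by
    obtain ⟨a, ha, hmax⟩ := A.exists_mem_eq_sup' hA fun a => ⟪v, a⟫
    exact hmax ▸ hsep a (subset_convexHull ℝ _ ha)
  linarith [hhit v hv, inner_le_sup'_of_mem_convexHull hPin v hx]
end

section
/- Let P ⊆ ℝ^d be a finite nonempty set, let T ⊆ conv(P) be a finite nonempty set, and let O ⊆ conv(P) be a finite nonempty set such that every p ∈ P satisfies dist(p, conv(O)) ≤ ε. Let r = max_{p ∈ P} dist(p, conv(T)). Then there exists a point o ∈ O with r − ε ≤ dist(o, conv(T)) ≤ r; moreover, dist(o, conv(T)) ≤ r holds for every o ∈ O. -/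
/-!
Distance to the convex set `conv T` is a convex function, so on `conv P` it is maximised at a
point of `P`; this bounds it by `r` on `O ⊆ conv P`. Conversely, take `p ∈ P` realising `r` and
its nearest point `y ∈ conv O`, at distance at most `ε`: then `dist(y, conv T) ≥ r - ε`, and by
the same maximum principle some `o ∈ O` is at least as far from `conv T`.
-/

open Metric Set

section

variable {E : Type*} [SeminormedAddCommGroup E] [NormedSpace ℝ E] {C : Set E}

theorem Convex.convexOn_infDist (hC : Convex ℝ C) : ConvexOn ℝ univ (infDist · C) := by
  rcases C.eq_empty_or_nonempty with rfl | hne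
  · simpa only [infDist_empty] using convexOn_const (0 : ℝ) convex_univ
  refine ⟨convex_univ, fun x _ y _ a b ha hb hab => le_of_forall_pos_le_add fun δ hδ => ?_⟩
  obtain ⟨u, hu, hxu⟩ := (infDist_lt_iff hne).1 (lt_add_of_pos_right (infDist x C) hδ)
  obtain ⟨v, hv, hyv⟩ := (infDist_lt_iff hne).1 (lt_add_of_pos_right (infDist y C) hδ)
  calc infDist (a • x + b • y) C ≤ dist (a • x + b • y) (a • u + b • v) :=
        infDist_le_dist_of_mem (hC hu hv ha hb hab)
    _ ≤ a * dist x u + b * dist y v := by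
        grw [dist_add_add_le, dist_smul₀, dist_smul₀, Real.norm_of_nonneg ha,
          Real.norm_of_nonneg hb]
    _ ≤ a * (infDist x C + δ) + b * (infDist y C + δ) := by gcongr
    _ = a * infDist x C + b * infDist y C + δ := by linear_combination δ * hab

theorem Convex.exists_infDist_ge_of_mem_convexHull (hC : Convex ℝ C) {s : Set E} {x : E}
    (hx : x ∈ convexHull ℝ s) : ∃ y ∈ s, infDist x C ≤ infDist y C :=
  hC.convexOn_infDist.exists_ge_of_mem_convexHull (subset_univ s) hx

theorem Convex.exists_mem_infDist_sub_infDist_convexHull_le (hC : Convex ℝ C) {s : Set E}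
    (hs : s.Finite) (hne : s.Nonempty) (p : E) :
    ∃ o ∈ s, infDist p C - infDist p (convexHull ℝ s) ≤ infDist o C := by
  obtain ⟨y, hy, hpy⟩ := (hs.isCompact_convexHull ℝ).exists_infDist_eq_dist hne.convexHull p
  obtain ⟨o, ho, hyo⟩ := hC.exists_infDist_ge_of_mem_convexHull hy
  have := infDist_le_infDist_add_dist (x := p) (y := y) (s := C)
  exact ⟨o, ho, by linarith⟩

end

theorem opt_point_in_shadow_general
    (d : ℕ) (P T O : Finset (EuclideanSpace ℝ (Fin d)))
    (hP : P.Nonempty) (hO : O.Nonempty)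
    (hOP : (↑O : Set (EuclideanSpace ℝ (Fin d))) ⊆
      convexHull ℝ (↑P : Set (EuclideanSpace ℝ (Fin d))))
    (ε : ℝ)
    (hOapprox : ∀ p ∈ P,
      Metric.infDist p (convexHull ℝ (↑O : Set (EuclideanSpace ℝ (Fin d)))) ≤ ε)
    (r : ℝ)
    (hr : r = P.sup' hP fun p =>
      Metric.infDist p (convexHull ℝ (↑T : Set (EuclideanSpace ℝ (Fin d))))) :
    (∃ o ∈ O, r - ε ≤
        Metric.infDist o (convexHull ℝ (↑T : Set (EuclideanSpace ℝ (Fin d)))) ∧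
        Metric.infDist o (convexHull ℝ (↑T : Set (EuclideanSpace ℝ (Fin d)))) ≤ r) ∧
    ∀ o ∈ O,
      Metric.infDist o (convexHull ℝ (↑T : Set (EuclideanSpace ℝ (Fin d)))) ≤ r := by
  set K := convexHull ℝ (↑T : Set (EuclideanSpace ℝ (Fin d)))
  have hK : Convex ℝ K := convex_convexHull ℝ _
  have le_r : ∀ o ∈ O, infDist o K ≤ r := fun o ho => by
    obtain ⟨p, hp, hop⟩ := hK.exists_infDist_ge_of_mem_convexHull (hOP ho)
    exact hr ▸ hop.trans (Finset.le_sup' (infDist · K) hp)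
  obtain ⟨p, hp, hpr⟩ := Finset.exists_mem_eq_sup' hP (infDist · K)
  obtain ⟨o, ho, hpo⟩ := hK.exists_mem_infDist_sub_infDist_convexHull_le O.finite_toSet hO p
  have hpε := hOapprox p hp
  exact ⟨⟨o, ho, by linarith, le_r o ho⟩, le_r⟩

theorem opt_point_in_shadow
    (d : ℕ) (P T O : Finset (EuclideanSpace ℝ (Fin d)))
    (hP : P.Nonempty) (hT : T.Nonempty) (hO : O.Nonempty)
    (hTP : (↑T : Set (EuclideanSpace ℝ (Fin d))) ⊆
      convexHull ℝ (↑P : Set (EuclideanSpace ℝ (Fin d))))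
    (hOP : (↑O : Set (EuclideanSpace ℝ (Fin d))) ⊆
      convexHull ℝ (↑P : Set (EuclideanSpace ℝ (Fin d))))
    (ε : ℝ)
    (hOapprox : ∀ p ∈ P,
      Metric.infDist p (convexHull ℝ (↑O : Set (EuclideanSpace ℝ (Fin d)))) ≤ ε)
    (r : ℝ)
    (hr : r = P.sup' hP fun p =>
      Metric.infDist p (convexHull ℝ (↑T : Set (EuclideanSpace ℝ (Fin d))))) :
    (∃ o ∈ O, r - ε ≤
        Metric.infDist o (convexHull ℝ (↑T : Set (EuclideanSpace ℝ (Fin d)))) ∧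
        Metric.infDist o (convexHull ℝ (↑T : Set (EuclideanSpace ℝ (Fin d)))) ≤ r) ∧
    ∀ o ∈ O,
      Metric.infDist o (convexHull ℝ (↑T : Set (EuclideanSpace ℝ (Fin d)))) ≤ r :=
  opt_point_in_shadow_general d P T O hP hO hOP ε hOapprox r hr
end

section
/- Let ε ∈ (0, 1/512], let P ⊆ ℝ^d be a finite set with diam(P) ≤ 1, and let T ⊆ conv(P) be a finite nonempty set. Let a ∈ P be a point attaining r = max_{p ∈ P} dist(p, conv(T)), let a' be the nearest point to a in conv(T), and let v = (a − a')/r. Suppose r ≥ 8·ε^{1/3}. Then every point o ∈ conv(P) satisfying ⟨v, o⟩ ≥ ⟨v, a⟩ − ε (i.e., lying in the ε-shadow halfspace determined by a) satisfies dist(o, conv(T ∪ {a})) ≤ (1 − ε^{2/3}) · dist(o, conv(T)). -/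
open Metric
open scoped Classical
open scoped RealInnerProductSpace

/-!
Let `o'` be the nearest point to `o` in `conv T`, so `δ = ‖o - o'‖ ≤ r` (the distance to the convex
set `conv T` is convex, and is at most `r` on `P`). Write `ε = u³`. The shadow condition and the
obtuse angle at `a'` make the `v`-component of `o - o'` at least `r - u³`, so its component
orthogonal to `v` has length at most `√(2 r u³) ≤ r² / 16`. With the obtuse angle at `o'` this gives
`⟪o - o', a - o'⟫ ≥ r² / 2`, and the foot of the perpendicular from `o` to the segment `[o', a]`,
which lies in `conv (T ∪ {a})`, is at distance at most `(1 - u²) δ` from `o`.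
-/

theorem sq_div_two_le_mul_sub_sqrt {u r α δ : ℝ} (hu : 0 ≤ u) (hur : 8 * u ≤ r) (hr1 : r ≤ 1)
    (hα : r - u ^ 3 ≤ α) (hαδ : α ≤ δ) (hδ : δ ≤ r) :
    r ^ 2 / 2 ≤ r * α - √(δ ^ 2 - α ^ 2) := by
  have hr : 0 ≤ r := by linarith
  have hu3 : 512 * u ^ 3 ≤ r ^ 3 := by
    have := pow_le_pow_left₀ (by positivity) hur 3
    linarith [show (8 * u) ^ 3 = 512 * u ^ 3 by ring]
  have hα0 : 0 ≤ r - u ^ 3 := by nlinarith [pow_le_of_le_one hr hr1 (by norm_num : 3 ≠ 0)]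
  have hsqrt : √(δ ^ 2 - α ^ 2) ≤ r ^ 2 / 16 := by
    rw [Real.sqrt_le_left (by positivity)]
    nlinarith
  nlinarith

theorem sq_sub_sq_div_sq_le {u r δ C B : ℝ} (hu : 0 ≤ u) (hur : 8 * u ≤ r) (hδ0 : 0 ≤ δ)
    (hδ : δ ≤ r) (hC : r ^ 2 / 2 ≤ C) (hB0 : 0 < B) (hB1 : B ≤ 1) :
    δ ^ 2 - C ^ 2 / B ^ 2 ≤ ((1 - u ^ 2) * δ) ^ 2 := by
  have hCB : C ^ 2 ≤ C ^ 2 / B ^ 2 :=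
    le_div_self (sq_nonneg C) (by positivity) (pow_le_one₀ hB0.le hB1)
  have hC2 : r ^ 4 / 4 ≤ C ^ 2 := by nlinarith
  have hu2 : 64 * u ^ 2 ≤ r ^ 2 := by nlinarith
  nlinarith [mul_le_mul hu2 (pow_le_pow_left₀ hδ0 hδ 2) (sq_nonneg δ) (by positivity)]

section NormedSpace

variable {E : Type*} [NormedAddCommGroup E] [NormedSpace ℝ E]

theorem Convex.infDist_le_of_mem_convexHull {K s : Set E} (hK : Convex ℝ K) (hKne : K.Nonempty)
    {r : ℝ} (hr : 0 ≤ r) (hs : ∀ p ∈ s, infDist p K ≤ r) {x : E} (hx : x ∈ convexHull ℝ s) :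
    infDist x K ≤ r := by
  have hsub : s ⊆ Metric.cthickening r K := fun p hp => by
    rw [mem_cthickening_iff]
    exact (ENNReal.le_ofReal_iff_toReal_le (infEDist_ne_top hKne) hr).2 (hs p hp)
  have hx' := convexHull_min hsub (hK.cthickening r) hx
  rw [mem_cthickening_iff] at hx'
  exact ENNReal.toReal_le_of_le_ofReal hr hx'

end NormedSpace

section InnerProductSpace

variable {E : Type*} [NormedAddCommGroup E] [InnerProductSpace ℝ E]

theorem Convex.real_inner_sub_nonpos_of_dist_eq_infDist {K : Set E} (hK : Convex ℝ K)
    {x y w : E} (hy : y ∈ K) (hw : w ∈ K) (h : dist x y = infDist x K) :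
    ⟪x - y, w - y⟫ ≤ 0 := by
  rw [infDist_eq_iInf] at h
  simp_rw [dist_eq_norm] at h
  exact (norm_eq_iInf_iff_real_inner_le_zero hK hy).1 h w hw

theorem neg_sqrt_mul_norm_le_real_inner {v x s : E} (hv : ‖v‖ = 1) (hx : 0 ≤ ⟪v, x⟫)
    (hs : 0 ≤ ⟪v, s⟫) : -(√(‖x‖ ^ 2 - ⟪v, x⟫ ^ 2) * ‖s‖) ≤ ⟪x, s⟫ := by
  set w := x - ⟪v, x⟫ • v
  have hw : ‖w‖ = √(‖x‖ ^ 2 - ⟪v, x⟫ ^ 2) := by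
    rw [← Real.sqrt_sq (norm_nonneg w), norm_sub_sq_real, real_inner_smul_right, norm_smul,
      Real.norm_eq_abs, hv, mul_one, sq_abs, real_inner_comm]
    congr 1
    ring
  have hxs : ⟪x, s⟫ = ⟪v, x⟫ * ⟪v, s⟫ + ⟪w, s⟫ := by
    simp [w, inner_sub_left, real_inner_smul_left]
  rw [hxs, ← hw]
  nlinarith [mul_nonneg hx hs, neg_le_of_abs_le (abs_real_inner_le_norm w s)]

theorem exists_mem_segment_norm_sub_sq_eq (o p a : E) (h0 : 0 ≤ ⟪o - p, a - p⟫)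
    (h1 : ⟪o - p, a - p⟫ ≤ ‖a - p‖ ^ 2) :
    ∃ q ∈ segment ℝ p a, ‖o - q‖ ^ 2 = ‖o - p‖ ^ 2 - ⟪o - p, a - p⟫ ^ 2 / ‖a - p‖ ^ 2 := by
  rcases eq_or_ne a p with rfl | hap
  · exact ⟨a, left_mem_segment ℝ a a, by simp⟩
  have hB : 0 < ‖a - p‖ ^ 2 := by
    have := sub_ne_zero.2 hap
    positivity
  set t := ⟪o - p, a - p⟫ / ‖a - p‖ ^ 2
  refine ⟨p + t • (a - p), ?_, ?_⟩
  · rw [segment_eq_image']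
    exact ⟨t, ⟨div_nonneg h0 hB.le, (div_le_one hB).2 h1⟩, rfl⟩
  · rw [show o - (p + t • (a - p)) = (o - p) - t • (a - p) by abel, norm_sub_sq_real,
      real_inner_smul_right, norm_smul, mul_pow, Real.norm_eq_abs, sq_abs]
    simp only [t]
    field_simp
    ring

theorem exists_mem_segment_dist_le_of_mem_shadow {a a' o o' : E} {r u : ℝ} (hu : 0 < u)
    (hur : 8 * u ≤ r) (har : dist a a' = r) (hor : dist o o' ≤ r) (ha'o' : dist a' o' ≤ 1)
    (hao' : dist a o' ≤ 1) (ha' : ⟪a - a', o' - a'⟫ ≤ 0) (ho' : ⟪o - o', a' - o'⟫ ≤ 0)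
    (hshadow : ⟪r⁻¹ • (a - a'), a⟫ - u ^ 3 ≤ ⟪r⁻¹ • (a - a'), o⟫) :
    ∃ q ∈ segment ℝ o' a, dist o q ≤ (1 - u ^ 2) * dist o o' := by
  have hr : 0 < r := by linarith
  rw [dist_eq_norm] at har hor ha'o' hao'
  set v := r⁻¹ • (a - a') with hv
  have hrv : a - a' = r • v := by rw [hv, smul_smul, mul_inv_cancel₀ hr.ne', one_smul]
  have hv1 : ‖v‖ = 1 := by
    rw [hv, norm_smul, har, norm_inv, Real.norm_of_nonneg hr.le, inv_mul_cancel₀ hr.ne']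
  have hva' : 0 ≤ ⟪v, a' - o'⟫ := by
    rw [hrv, real_inner_smul_left] at ha'
    have := nonpos_of_mul_nonpos_right ha' hr
    rw [← neg_sub, inner_neg_right]
    linarith
  set α := ⟪v, o - o'⟫
  have hα : r - u ^ 3 ≤ α := by
    have hva : ⟪v, a - a'⟫ = r := by
      rw [hrv, real_inner_smul_right, real_inner_self_eq_norm_sq, hv1]; ring
    simp only [α, inner_sub_right] at hva hva' ⊢
    linarith
  have hαδ : α ≤ ‖o - o'‖ := (real_inner_le_norm _ _).trans (by rw [hv1, one_mul])
  have hr1 : r ≤ ‖a - o'‖ := by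
    have h : ‖a - o'‖ ^ 2 = r ^ 2 - 2 * ⟪a - a', o' - a'⟫ + ‖o' - a'‖ ^ 2 := by
      rw [← har, ← norm_sub_sq_real, sub_sub_sub_cancel_right]
    exact (pow_le_pow_iff_left₀ hr.le (norm_nonneg _) two_ne_zero).1 (by nlinarith)
  have hC : ⟪o - o', a - o'⟫ = r * α + ⟪o - o', a' - o'⟫ := by
    rw [show a - o' = r • v + (a' - o') by rw [← hrv]; abel, inner_add_right,
      real_inner_smul_right, real_inner_comm]
  have hClow : r ^ 2 / 2 ≤ ⟪o - o', a - o'⟫ := by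
    have hsqrt := Real.sqrt_nonneg (‖o - o'‖ ^ 2 - α ^ 2)
    have harith := sq_div_two_le_mul_sub_sqrt hu.le hur (hr1.trans hao') hα hαδ hor
    have hlat := neg_sqrt_mul_norm_le_real_inner hv1 (by nlinarith) hva' (x := o - o')
    nlinarith
  have hCup : ⟪o - o', a - o'⟫ ≤ ‖a - o'‖ ^ 2 :=
    calc ⟪o - o', a - o'⟫ ≤ r * α := by linarith
      _ ≤ r * r := by gcongr; exact hαδ.trans hor
      _ ≤ ‖a - o'‖ ^ 2 := by nlinarith
  obtain ⟨q, hq, hoq⟩ :=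
    exists_mem_segment_norm_sub_sq_eq o o' a (by linarith [sq_nonneg r]) hCup
  refine ⟨q, hq, ?_⟩
  rw [dist_eq_norm, dist_eq_norm]
  refine (pow_le_pow_iff_left₀ (norm_nonneg _) ?_ two_ne_zero).1 ?_
  · exact mul_nonneg (by nlinarith) (norm_nonneg _)
  · rw [hoq]
    exact sq_sub_sq_div_sq_le hu.le hur (norm_nonneg _) hor hClow (hr.trans_le hr1) hao'

end InnerProductSpace

theorem shrink_lemma_general
    (d : ℕ) (ε : ℝ) (hε : ε ∈ Set.Ioc (0 : ℝ) (1 / 512))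
    (P : Finset (EuclideanSpace ℝ (Fin d)))
    (hdiam : Metric.diam (↑P : Set (EuclideanSpace ℝ (Fin d))) ≤ 1)
    (T : Finset (EuclideanSpace ℝ (Fin d)))
    (hTP : (↑T : Set (EuclideanSpace ℝ (Fin d))) ⊆
      convexHull ℝ (↑P : Set (EuclideanSpace ℝ (Fin d))))
    (a : EuclideanSpace ℝ (Fin d)) (haP : a ∈ P)
    (r : ℝ)
    (hra : r = Metric.infDist a (convexHull ℝ (↑T : Set (EuclideanSpace ℝ (Fin d)))))
    (hmax : ∀ p ∈ P,
      Metric.infDist p (convexHull ℝ (↑T : Set (EuclideanSpace ℝ (Fin d)))) ≤ r)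
    (a' : EuclideanSpace ℝ (Fin d))
    (ha'T : a' ∈ convexHull ℝ (↑T : Set (EuclideanSpace ℝ (Fin d))))
    (ha'near : dist a a' = r)
    (v : EuclideanSpace ℝ (Fin d)) (hv : v = r⁻¹ • (a - a'))
    (hrbig : 8 * ε ^ ((1 : ℝ) / 3) ≤ r) :
    ∀ o ∈ convexHull ℝ (↑P : Set (EuclideanSpace ℝ (Fin d))),
      ⟪v, a⟫ - ε ≤ ⟪v, o⟫ →
      Metric.infDist o
          (convexHull ℝ (↑(insert a T) : Set (EuclideanSpace ℝ (Fin d)))) ≤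
        (1 - ε ^ ((2 : ℝ) / 3)) *
          Metric.infDist o (convexHull ℝ (↑T : Set (EuclideanSpace ℝ (Fin d)))) := by
  intro o ho hshadow
  subst hv
  have hu3 : (ε ^ ((1 : ℝ) / 3)) ^ 3 = ε := by
    rw [← Real.rpow_natCast, ← Real.rpow_mul hε.1.le]; norm_num
  have hu2 : ε ^ ((2 : ℝ) / 3) = (ε ^ ((1 : ℝ) / 3)) ^ 2 := by
    rw [← Real.rpow_natCast, ← Real.rpow_mul hε.1.le]; norm_num
  have hK : Convex ℝ (convexHull ℝ (↑T : Set (EuclideanSpace ℝ (Fin d)))) :=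
    convex_convexHull ℝ _
  obtain ⟨o', ho'K, ho'⟩ :=
    (T.finite_toSet.isCompact_convexHull ℝ).exists_infDist_eq_dist ⟨a', ha'T⟩ o
  have hKP := convexHull_min hTP (convex_convexHull ℝ _)
  have hdistP {x y} (hx : x ∈ convexHull ℝ (↑P : Set (EuclideanSpace ℝ (Fin d))))
      (hy : y ∈ convexHull ℝ (↑P : Set (EuclideanSpace ℝ (Fin d)))) : dist x y ≤ 1 :=
    (dist_le_diam_of_mem (P.finite_toSet.isCompact_convexHull ℝ).isBounded hx hy).trans
      ((convexHull_diam _).trans_le hdiam)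
  obtain ⟨q, hq, hoq⟩ := exists_mem_segment_dist_le_of_mem_shadow
    (Real.rpow_pos_of_pos hε.1 _) hrbig ha'near
    (ho' ▸ hK.infDist_le_of_mem_convexHull ⟨a', ha'T⟩ (hra ▸ infDist_nonneg) hmax ho)
    (hdistP (hKP ha'T) (hKP ho'K)) (hdistP (subset_convexHull ℝ _ haP) (hKP ho'K))
    (hK.real_inner_sub_nonpos_of_dist_eq_infDist ha'T ho'K (ha'near.trans hra))
    (hK.real_inner_sub_nonpos_of_dist_eq_infDist ho'K ha'T ho'.symm) (hu3.symm ▸ hshadow)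
  have hqM : q ∈ convexHull ℝ (↑(insert a T) : Set (EuclideanSpace ℝ (Fin d))) :=
    (convex_convexHull ℝ _).segment_subset (convexHull_mono (by simp) ho'K)
      (subset_convexHull ℝ _ (by simp)) hq
  rw [hu2, ho']
  exact (infDist_le_dist_of_mem hqM).trans hoq

theorem shrink_lemma
    (d : ℕ) (ε : ℝ) (hε : ε ∈ Set.Ioc (0 : ℝ) (1 / 512))
    (P : Finset (EuclideanSpace ℝ (Fin d)))
    (hdiam : Metric.diam (↑P : Set (EuclideanSpace ℝ (Fin d))) ≤ 1)
    (T : Finset (EuclideanSpace ℝ (Fin d))) (hT : T.Nonempty)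
    (hTP : (↑T : Set (EuclideanSpace ℝ (Fin d))) ⊆
      convexHull ℝ (↑P : Set (EuclideanSpace ℝ (Fin d))))
    (a : EuclideanSpace ℝ (Fin d)) (haP : a ∈ P)
    (r : ℝ)
    (hra : r = Metric.infDist a (convexHull ℝ (↑T : Set (EuclideanSpace ℝ (Fin d)))))
    (hmax : ∀ p ∈ P,
      Metric.infDist p (convexHull ℝ (↑T : Set (EuclideanSpace ℝ (Fin d)))) ≤ r)
    (a' : EuclideanSpace ℝ (Fin d))
    (ha'T : a' ∈ convexHull ℝ (↑T : Set (EuclideanSpace ℝ (Fin d))))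
    (ha'near : dist a a' = r)
    (v : EuclideanSpace ℝ (Fin d)) (hv : v = r⁻¹ • (a - a'))
    (hrbig : 8 * ε ^ ((1 : ℝ) / 3) ≤ r) :
    ∀ o ∈ convexHull ℝ (↑P : Set (EuclideanSpace ℝ (Fin d))),
      ⟪v, a⟫ - ε ≤ ⟪v, o⟫ →
      Metric.infDist o
          (convexHull ℝ (↑(insert a T) : Set (EuclideanSpace ℝ (Fin d)))) ≤
        (1 - ε ^ ((2 : ℝ) / 3)) *
          Metric.infDist o (convexHull ℝ (↑T : Set (EuclideanSpace ℝ (Fin d)))) :=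
  shrink_lemma_general d ε hε P hdiam T hTP a haP r hra hmax a' ha'T ha'near v hv hrbig
end

section
/- There is an absolute constant c > 0 such that the following holds. Let P be a finite set of points in ℝ^d with diameter D = diam(P) > 0, and let ε ∈ (0,1). Suppose there exists a set S ⊆ conv(P) of size k such that every point p ∈ P satisfies dist(p, conv(S)) ≤ ε·D. Then there exists a subset T ⊆ P with |T| ≤ c·k/ε^{2/3} such that the Hausdorff distance between conv(T) and conv(P) is at most (8·ε^{1/3} + ε)·D. The constant c is independent of the dimension d. -/
open Metric

section Aux

variable {E : Type*} [NormedAddCommGroup E] [InnerProductSpace ℝ E]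

local notation "⟪" x ", " y "⟫" => @inner ℝ _ _ x y

lemma exists_inner_nonpos (P : Finset E) {x : E}
    (hx : x ∈ convexHull ℝ (P : Set E)) (y : E) :
    ∃ q ∈ P, ⟪y - x, q - x⟫ ≤ 0 := by
  rw [Finset.convexHull_eq] at hx
  obtain ⟨w, hw0, hw1, hwx⟩ := hx
  by_contra h
  push_neg at h
  have hsum : ∑ i ∈ P, w i • (i - x) = 0 := by
    have := P.centerMass_eq_of_sum_1 id hw1
    rw [hwx] at this
    simp only [smul_sub, Finset.sum_sub_distrib, ← Finset.sum_smul, hw1, one_smul]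
    simp only [id] at this
    rw [this]; abel
  have hinner : ∑ i ∈ P, w i * ⟪y - x, i - x⟫ = 0 := by
    have : ⟪y - x, ∑ i ∈ P, w i • (i - x)⟫ = 0 := by rw [hsum, inner_zero_right]
    rw [inner_sum] at this
    simpa [real_inner_smul_right] using this
  have hzero : ∀ i ∈ P, w i * ⟪y - x, i - x⟫ = 0 := by
    intro i hi
    refine (Finset.sum_eq_zero_iff_of_nonneg ?_).1 hinner i hi
    intro j hj
    exact mul_nonneg (hw0 j hj) (h j hj).le
  obtain ⟨i, hi, hwi⟩ : ∃ i ∈ P, w i ≠ 0 := by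
    by_contra hc
    push_neg at hc
    rw [Finset.sum_eq_zero hc] at hw1
    norm_num at hw1
  have := hzero i hi
  have hpos := h i hi
  have : ⟪y - x, i - x⟫ = 0 := by
    rcases mul_eq_zero.1 this with h' | h'
    · exact absurd h' hwi
    · exact h'
  linarith

lemma approx_caratheodory (P : Finset E) {x : E}
    (hx : x ∈ convexHull ℝ (P : Set E)) {D : ℝ}
    (hDx : ∀ q ∈ P, ‖q - x‖ ≤ D) :
    ∀ n : ℕ, 0 < n → ∃ T : Finset E, T ⊆ P ∧ T.card ≤ n ∧
      ∃ y ∈ convexHull ℝ (T : Set E), ‖y - x‖ ^ 2 ≤ D ^ 2 / n := by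
  classical
  have hPne : (P : Set E).Nonempty := by
    rcases Set.eq_empty_or_nonempty (P : Set E) with h | h
    · rw [h, convexHull_empty] at hx; exact absurd hx (Set.notMem_empty x)
    · exact h
  obtain ⟨q₀, hq₀⟩ := hPne
  have hD0 : 0 ≤ D := le_trans (norm_nonneg _) (hDx q₀ hq₀)
  intro n hn
  induction n with
  | zero => exact absurd hn (lt_irrefl 0)
  | succ n ih =>
    rcases Nat.eq_zero_or_pos n with h0 | hpos
    · subst h0
      refine ⟨{q₀}, by simpa using hq₀, by simp, q₀, ?_, ?_⟩
      · exact subset_convexHull ℝ _ (by simp)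
      · have := hDx q₀ hq₀
        have : ‖q₀ - x‖ ^ 2 ≤ D ^ 2 := by nlinarith [norm_nonneg (q₀ - x)]
        simpa using this
    · obtain ⟨T, hTP, hTcard, y, hyT, hy⟩ := ih hpos
      obtain ⟨q, hqP, hq⟩ := exists_inner_nonpos P hx y
      set a : ℝ := (n : ℝ) / (n + 1) with ha_def
      set b : ℝ := 1 / ((n : ℝ) + 1) with hb_def
      have hn1 : (0 : ℝ) < (n : ℝ) + 1 := by positivity
      have ha0 : 0 ≤ a := by positivity
      have hb0 : 0 ≤ b := by positivity
      have hab : a + b = 1 := by rw [ha_def, hb_def]; field_simp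
      refine ⟨insert q T, Finset.insert_subset hqP hTP,
        le_trans (Finset.card_insert_le _ _) (Nat.succ_le_succ hTcard),
        a • y + b • q, ?_, ?_⟩
      · have hy' : y ∈ convexHull ℝ ((insert q T : Finset E) : Set E) :=
          convexHull_mono (by rw [Finset.coe_insert]; exact Set.subset_insert _ _) hyT
        have hq' : q ∈ convexHull ℝ ((insert q T : Finset E) : Set E) :=
          subset_convexHull ℝ _ (Finset.mem_coe.2 (Finset.mem_insert_self q T))
        exact (convex_convexHull ℝ _) hy' hq' ha0 hb0 hab
      · have hexp : a • y + b • q - x = a • (y - x) + b • (q - x) := by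
          have h' : a • (y - x) + b • (q - x) = a • y + b • q - (a + b) • x := by
            rw [smul_sub, smul_sub, add_smul]; abel
          rw [h', hab, one_smul]
        rw [hexp, norm_add_sq_real]
        rw [norm_smul, norm_smul, real_inner_smul_left, real_inner_smul_right]
        have h1 : ‖y - x‖ ^ 2 ≤ D ^ 2 / n := hy
        have h2 : ‖q - x‖ ≤ D := hDx q hqP
        have hqn : 0 ≤ ‖q - x‖ := norm_nonneg _
        have hnn : (0 : ℝ) < (n : ℝ) := by exact_mod_cast hpos
        have habs : |a| = a := abs_of_nonneg ha0
        have hbabs : |b| = b := abs_of_nonneg hb0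
        simp only [Real.norm_eq_abs, habs, hbabs]
        have key : (a * ‖y - x‖) ^ 2 + 2 * (a * (b * ⟪y - x, q - x⟫)) +
            (b * ‖q - x‖) ^ 2 ≤ a ^ 2 * (D ^ 2 / n) + b ^ 2 * D ^ 2 := by
          have t1 : (a * ‖y - x‖) ^ 2 ≤ a ^ 2 * (D ^ 2 / n) := by
            rw [mul_pow]; exact mul_le_mul_of_nonneg_left h1 (by positivity)
          have t2 : (b * ‖q - x‖) ^ 2 ≤ b ^ 2 * D ^ 2 := by
            rw [mul_pow]
            exact mul_le_mul_of_nonneg_left (by nlinarith) (by positivity)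
          have t3 : 2 * (a * (b * ⟪y - x, q - x⟫)) ≤ 0 := by
            have : a * (b * ⟪y - x, q - x⟫) ≤ 0 :=
              mul_nonpos_of_nonneg_of_nonpos ha0
                (mul_nonpos_of_nonneg_of_nonpos hb0 hq)
            linarith
          linarith
        refine le_trans key (le_of_eq ?_)
        rw [ha_def, hb_def]
        push_cast
        field_simp

end Aux

theorem main_theorem :
    ∃ c : ℝ, 0 < c ∧
      ∀ (d : ℕ) (P : Finset (EuclideanSpace ℝ (Fin d))),
        0 < Metric.diam (↑P : Set (EuclideanSpace ℝ (Fin d))) →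
        ∀ ε : ℝ, ε ∈ Set.Ioo (0 : ℝ) 1 →
        ∀ S : Finset (EuclideanSpace ℝ (Fin d)), S.Nonempty →
          (↑S : Set (EuclideanSpace ℝ (Fin d))) ⊆
            convexHull ℝ (↑P : Set (EuclideanSpace ℝ (Fin d))) →
          (∀ p ∈ P,
            Metric.infDist p
              (convexHull ℝ (↑S : Set (EuclideanSpace ℝ (Fin d)))) ≤
              ε * Metric.diam (↑P : Set (EuclideanSpace ℝ (Fin d)))) →
          ∃ T : Finset (EuclideanSpace ℝ (Fin d)), T.Nonempty ∧ T ⊆ P ∧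
            (T.card : ℝ) ≤ c * S.card / ε ^ ((2 : ℝ) / 3) ∧
            Metric.hausdorffDist
                (convexHull ℝ (↑T : Set (EuclideanSpace ℝ (Fin d))))
                (convexHull ℝ (↑P : Set (EuclideanSpace ℝ (Fin d)))) ≤
              (8 * ε ^ ((1 : ℝ) / 3) + ε) *
                Metric.diam (↑P : Set (EuclideanSpace ℝ (Fin d))) := by
  classical
  refine ⟨2, by norm_num, ?_⟩
  intro d P hdiam ε hε S hSne' hS hSP
  set D : ℝ := Metric.diam (↑P : Set (EuclideanSpace ℝ (Fin d))) with hD_def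
  have hε0 : 0 < ε := hε.1
  have hε1 : ε < 1 := hε.2
  have hr1pos : 0 < ε ^ ((1 : ℝ) / 3) := Real.rpow_pos_of_pos hε0 _
  have hr2pos : 0 < ε ^ ((2 : ℝ) / 3) := Real.rpow_pos_of_pos hε0 _
  have hrhs0 : 0 ≤ (8 * ε ^ ((1 : ℝ) / 3) + ε) * D := by
    apply mul_nonneg (by nlinarith) hdiam.le
  rcases S.eq_empty_or_nonempty with rfl | hSne
  · exact absurd hSne' Finset.not_nonempty_empty
  -- S nonempty
  obtain ⟨s₀, hs₀⟩ := hSne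
  set r1 : ℝ := ε ^ ((1 : ℝ) / 3) with hr1_def
  set r2 : ℝ := ε ^ ((2 : ℝ) / 3) with hr2_def
  have hr2le1 : r2 ≤ 1 := Real.rpow_le_one hε0.le hε1.le (by norm_num)
  have hr12 : r1 ^ 2 = r2 := by
    rw [hr1_def, hr2_def, ← Real.rpow_natCast (ε ^ ((1 : ℝ) / 3)) 2,
      ← Real.rpow_mul hε0.le]
    norm_num
  set m : ℕ := ⌈1 / r2⌉₊ with hm_def
  have hmpos : 0 < m := by
    rw [hm_def]
    exact Nat.one_le_ceil_iff.2 (by positivity)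
  have hmler : (m : ℝ) ≤ 2 / r2 := by
    have h1 : (1 : ℝ) ≤ 1 / r2 := by rw [le_div_iff₀ hr2pos]; linarith
    have h2 : (m : ℝ) < 1 / r2 + 1 := Nat.ceil_lt_add_one (by positivity)
    have h3 : (2 : ℝ) / r2 = 1 / r2 + 1 / r2 := by ring
    linarith
  have hinvm : 1 / (m : ℝ) ≤ r2 := by
    have h1 : (1 : ℝ) / r2 ≤ (m : ℝ) := Nat.le_ceil _
    rw [div_le_iff₀ (by exact_mod_cast hmpos)]
    rw [div_le_iff₀ hr2pos] at h1
    nlinarith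
  have hPbconv : Bornology.IsBounded (convexHull ℝ (↑P : Set (EuclideanSpace ℝ (Fin d)))) :=
    isBounded_convexHull.2 P.finite_toSet.isBounded
  have hdistP : ∀ x ∈ convexHull ℝ (↑P : Set (EuclideanSpace ℝ (Fin d))),
      ∀ q ∈ P, ‖q - x‖ ≤ D := by
    intro x hx q hq
    rw [← dist_eq_norm, hD_def, ← convexHull_diam]
    exact Metric.dist_le_diam_of_mem hPbconv (subset_convexHull ℝ _ hq) hx
  -- apply approximate Caratheodory for each s ∈ S
  have H : ∀ s ∈ S, ∃ Ts : Finset (EuclideanSpace ℝ (Fin d)), Ts ⊆ P ∧ Ts.card ≤ m ∧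
      ∃ y ∈ convexHull ℝ (↑Ts : Set (EuclideanSpace ℝ (Fin d))), dist s y ≤ D * r1 := by
    intro s hs
    have hs' : s ∈ convexHull ℝ (↑P : Set (EuclideanSpace ℝ (Fin d))) :=
      hS (Finset.mem_coe.2 hs)
    obtain ⟨Ts, hTsP, hTscard, y, hyTs, hy⟩ :=
      approx_caratheodory P hs' (hdistP s hs') m hmpos
    refine ⟨Ts, hTsP, hTscard, y, hyTs, ?_⟩
    have hDrpos : 0 ≤ D * r1 := by positivity
    have hle : ‖y - s‖ ^ 2 ≤ (D * r1) ^ 2 := by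
      have h1 : D ^ 2 / (m : ℝ) ≤ D ^ 2 * r2 := by
        have : D ^ 2 / (m : ℝ) = D ^ 2 * (1 / (m : ℝ)) := by ring
        rw [this]
        exact mul_le_mul_of_nonneg_left hinvm (by positivity)
      have h2 : (D * r1) ^ 2 = D ^ 2 * r2 := by rw [mul_pow, hr12]
      rw [h2]; exact le_trans hy h1
    have : ‖y - s‖ ≤ D * r1 := by nlinarith [norm_nonneg (y - s)]
    rwa [dist_eq_norm, ← norm_neg, neg_sub]
  choose! f hfP hfcard yf hyf hydist using H
  set T : Finset (EuclideanSpace ℝ (Fin d)) := S.biUnion f with hT_def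
  have hTP : T ⊆ P := Finset.biUnion_subset.2 hfP
  have hTcard : (T.card : ℝ) ≤ 2 * S.card / r2 := by
    have h1 : T.card ≤ ∑ s ∈ S, (f s).card := Finset.card_biUnion_le
    have h2 : ∑ s ∈ S, (f s).card ≤ S.card * m := by
      calc ∑ s ∈ S, (f s).card ≤ ∑ _s ∈ S, m := Finset.sum_le_sum hfcard
        _ = S.card * m := by rw [Finset.sum_const, smul_eq_mul]
    have h3 : (T.card : ℝ) ≤ (S.card : ℝ) * m := by exact_mod_cast le_trans h1 h2
    have h4 : (S.card : ℝ) * (m : ℝ) ≤ (S.card : ℝ) * (2 / r2) :=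
      mul_le_mul_of_nonneg_left hmler (by positivity)
    calc (T.card : ℝ) ≤ (S.card : ℝ) * (2 / r2) := le_trans h3 h4
      _ = 2 * S.card / r2 := by ring
  refine ⟨T, (Finset.coe_nonempty.1 (convexHull_nonempty_iff.1 ⟨_, hyf s₀ hs₀⟩)).mono
    (Finset.subset_biUnion_of_mem f hs₀), hTP, hTcard, ?_⟩
  -- Hausdorff distance bound
  set CT := convexHull ℝ (↑T : Set (EuclideanSpace ℝ (Fin d))) with hCT_def
  set CP := convexHull ℝ (↑P : Set (EuclideanSpace ℝ (Fin d))) with hCP_def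
  set CS := convexHull ℝ (↑S : Set (EuclideanSpace ℝ (Fin d))) with hCS_def
  have hCTne : CT.Nonempty := by
    refine ⟨yf s₀, ?_⟩
    exact convexHull_mono (Finset.coe_subset.2 (Finset.subset_biUnion_of_mem f hs₀))
      (hyf s₀ hs₀)
  have hCTconv : Convex ℝ CT := convex_convexHull ℝ _
  have hDr1 : 0 ≤ D * r1 := by positivity
  -- every point of conv S is within D*r1 of conv T
  have hCS_thick : CS ⊆ Metric.cthickening (D * r1) CT := by
    apply convexHull_min ?_ (hCTconv.cthickening _)
    intro s hs
    rw [Finset.mem_coe] at hs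
    refine Metric.mem_cthickening_of_dist_le s (yf s) _ _ ?_ (hydist s hs)
    exact convexHull_mono (Finset.coe_subset.2 (Finset.subset_biUnion_of_mem f hs))
      (hyf s hs)
  -- every point of P is within ε*D + D*r1 of conv T
  have hr' : 0 ≤ ε * D + D * r1 := by positivity
  have hP_inf : ∀ p ∈ P, Metric.infDist p CT ≤ ε * D + D * r1 := by
    intro p hp
    have hCScpt : IsCompact CS := S.finite_toSet.isCompact_convexHull (𝕜 := ℝ)
    have hCSne : CS.Nonempty := ⟨s₀, subset_convexHull ℝ _ (Finset.mem_coe.2 hs₀)⟩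
    obtain ⟨y, hyCS, hydist'⟩ := hCScpt.exists_infDist_eq_dist hCSne p
    have h1 : Metric.infDist y CT ≤ D * r1 := by
      have := hCS_thick hyCS
      rw [Metric.mem_cthickening_iff] at this
      exact ENNReal.toReal_le_of_le_ofReal hDr1 this
    have h2 : dist p y ≤ ε * D := by
      rw [← hydist']
      exact hSP p hp
    calc Metric.infDist p CT ≤ Metric.infDist y CT + dist p y :=
          Metric.infDist_le_infDist_add_dist
      _ ≤ D * r1 + ε * D := add_le_add h1 h2
      _ = ε * D + D * r1 := by ring
  have hCP_thick : CP ⊆ Metric.cthickening (ε * D + D * r1) CT := by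
    apply convexHull_min ?_ (hCTconv.cthickening _)
    intro p hp
    rw [Finset.mem_coe] at hp
    rw [Metric.mem_cthickening_iff]
    rw [ENNReal.le_ofReal_iff_toReal_le (Metric.infEdist_ne_top hCTne) hr']
    exact hP_inf p hp
  apply Metric.hausdorffDist_le_of_infDist hrhs0
  · intro x hx
    have : x ∈ CP := convexHull_mono (Finset.coe_subset.2 hTP) hx
    rw [Metric.infDist_zero_of_mem this]
    exact hrhs0
  · intro y hy
    have h1 : Metric.infDist y CT ≤ ε * D + D * r1 := by
      have := hCP_thick hy
      rw [Metric.mem_cthickening_iff] at this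
      exact ENNReal.toReal_le_of_le_ofReal hr' this
    have h2 : ε * D + D * r1 ≤ (8 * r1 + ε) * D := by nlinarith
    exact le_trans h1 h2
end
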